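/- For s ∈ (1/2, 1], |t F'_s(t)| ≤ 5 F_s(t) for all real t, where F_s(t) = θ(t)|t|^s with θ(t) = (3/8)|t|^{1/2}(t² - (10/3)|t| + 5) for |t| ≤ 1 and θ(t) = 1 for |t| > 1. -/
import Mathlib


noncomputable def theta (t : ℝ) : ℝ :=
  if |t| ≤ 1 then (3/8) * |t| ^ ((1:ℝ)/2) * (t^2 - (10/3) * |t| + 5) else 1

noncomputable def Fs (s t : ℝ) : ℝ := theta t * |t| ^ s

open Set Filter

noncomputable def fpos (s t : ℝ) : ℝ :=
  (3/8) * (t ^ (s + 5/2) - (10/3) * t ^ (s + 3/2) + 5 * t ^ (s + 1/2))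

lemma Fs_eq_fpos {s t : ℝ} (ht : 0 < t) (ht1 : t ≤ 1) : Fs s t = fpos s t := by
  have habs : |t| = t := abs_of_pos ht
  have e1 : t ^ (s + 5/2) = t ^ ((1:ℝ)/2) * t ^ 2 * t ^ s := by
    rw [← Real.rpow_natCast t 2, ← Real.rpow_add ht, ← Real.rpow_add ht]
    congr 1; push_cast; ring
  have e2 : t ^ (s + 3/2) = t ^ ((1:ℝ)/2) * t ^ (1:ℝ) * t ^ s := by
    rw [← Real.rpow_add ht, ← Real.rpow_add ht]
    congr 1; ring
  have e3 : t ^ (s + 1/2) = t ^ ((1:ℝ)/2) * t ^ s := by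
    rw [← Real.rpow_add ht]; congr 1; ring
  simp only [Fs, theta, habs]
  rw [if_pos ht1, fpos, e1, e2, e3, Real.rpow_one]
  ring

lemma Fs_eq_rpow {s u : ℝ} (hu : 1 ≤ u) : Fs s u = u ^ s := by
  have habs : |u| = u := abs_of_pos (lt_of_lt_of_le one_pos hu)
  simp only [Fs, theta, habs]
  rcases eq_or_lt_of_le hu with rfl | h
  · norm_num
  · rw [if_neg (not_le.2 h), one_mul]

lemma hasDerivAt_fpos {s : ℝ} {t : ℝ} (ht : t ≠ 0) :
    HasDerivAt (fpos s)
      ((3/8) * ((s + 5/2) * t ^ (s + 3/2) - (10/3) * ((s + 3/2) * t ^ (s + 1/2))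
        + 5 * ((s + 1/2) * t ^ (s - 1/2)))) t := by
  have d1 := Real.hasDerivAt_rpow_const (x := t) (p := s + 5/2) (Or.inl ht)
  have d2 := Real.hasDerivAt_rpow_const (x := t) (p := s + 3/2) (Or.inl ht)
  have d3 := Real.hasDerivAt_rpow_const (x := t) (p := s + 1/2) (Or.inl ht)
  rw [show s + 5/2 - 1 = s + 3/2 by ring] at d1
  rw [show s + 3/2 - 1 = s + 1/2 by ring] at d2
  rw [show s + 1/2 - 1 = s - 1/2 by ring] at d3
  exact ((d1.sub (d2.const_mul (10/3))).add (d3.const_mul 5)).const_mul (3/8)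

lemma hasDerivAt_Fs {s t : ℝ} (ht : 0 < t) (ht1 : t ≤ 1) :
    HasDerivAt (Fs s)
      ((3/8) * ((s + 5/2) * t ^ (s + 3/2) - (10/3) * ((s + 3/2) * t ^ (s + 1/2))
        + 5 * ((s + 1/2) * t ^ (s - 1/2)))) t := by
  rcases lt_or_eq_of_le ht1 with hlt | rfl
  · have hev : Fs s =ᶠ[nhds t] fpos s := by
      filter_upwards [Ioo_mem_nhds ht hlt] with u hu
      exact Fs_eq_fpos hu.1 hu.2.le
    exact (hasDerivAt_fpos ht.ne').congr_of_eventuallyEq hev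
  · have hval : (3/8) * ((s + 5/2) * (1:ℝ) ^ (s + 3/2) - (10/3) * ((s + 3/2) * (1:ℝ) ^ (s + 1/2))
        + 5 * ((s + 1/2) * (1:ℝ) ^ (s - 1/2))) = s := by
      simp [Real.one_rpow]; ring_nf
    rw [hval]
    have left : HasDerivWithinAt (Fs s) s (Iic 1) 1 := by
      have dl := (hasDerivAt_fpos (s := s) (t := 1) one_ne_zero).hasDerivWithinAt (s := Iic 1)
      rw [hval] at dl
      refine dl.congr_of_eventuallyEq ?_ (Fs_eq_fpos one_pos le_rfl)
      have hmem : Ioi (0:ℝ) ∩ Iic 1 ∈ nhdsWithin (1:ℝ) (Iic 1) :=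
        inter_mem (nhdsWithin_le_nhds (Ioi_mem_nhds one_pos)) self_mem_nhdsWithin
      filter_upwards [hmem] with u hu
      exact Fs_eq_fpos hu.1 hu.2
    have right : HasDerivWithinAt (Fs s) s (Ici 1) 1 := by
      have dr := (Real.hasDerivAt_rpow_const (x := (1:ℝ)) (p := s)
        (Or.inl one_ne_zero)).hasDerivWithinAt (s := Ici 1)
      rw [show s * (1:ℝ) ^ (s - 1) = s by simp] at dr
      refine dr.congr_of_eventuallyEq ?_ (Fs_eq_rpow le_rfl)
      filter_upwards [self_mem_nhdsWithin] with u hu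
      exact Fs_eq_rpow hu
    have := left.union right
    rw [Set.Iic_union_Ici] at this
    exact hasDerivWithinAt_univ.mp this

lemma bound_pos {s t : ℝ} (hs1 : 1/2 < s) (hs2 : s ≤ 1) (ht : 0 < t) (ht1 : t ≤ 1) :
    |t * deriv (Fs s) t| ≤ 5 * Fs s t := by
  rw [(hasDerivAt_Fs ht ht1).deriv, Fs_eq_fpos ht ht1, fpos]
  have hX : 0 < t ^ (s + 1/2) := Real.rpow_pos_of_pos ht _
  have q0 : t ^ (s - 1/2) = t ^ (s + 1/2) / t := by
    rw [eq_div_iff ht.ne', ← Real.rpow_add_one ht.ne']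
    congr 1; ring
  have q1 : t ^ (s + 3/2) = t ^ (s + 1/2) * t := by
    rw [← Real.rpow_add_one ht.ne']
    congr 1; ring
  have q2 : t ^ (s + 5/2) = t ^ (s + 1/2) * t * t := by
    rw [← Real.rpow_add_one ht.ne', ← Real.rpow_add_one ht.ne']
    congr 1; ring
  have hN : 0 ≤ (s + 5/2) * t^2 - (10/3) * (s + 3/2) * t + 5 * (s + 1/2) := by
    nlinarith [mul_nonneg (sub_nonneg.2 ht1)
      (show (0:ℝ) ≤ 10/3 * (s + 3/2) - (s + 5/2) * (t + 1) by nlinarith)]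
  have hND : (s + 5/2) * t^2 - (10/3) * (s + 3/2) * t + 5 * (s + 1/2)
      ≤ 5 * (t^2 - (10/3) * t + 5) := by
    nlinarith [mul_nonneg (sub_nonneg.2 ht1)
      (show (0:ℝ) ≤ 10/3 * (7/2 - s) - (5/2 - s) * (t + 1) by nlinarith)]
  have key : t * ((3/8) * ((s + 5/2) * t ^ (s + 3/2) - (10/3) * ((s + 3/2) * t ^ (s + 1/2))
        + 5 * ((s + 1/2) * t ^ (s - 1/2))))
      = (3/8) * (((s + 5/2) * t^2 - (10/3) * (s + 3/2) * t + 5 * (s + 1/2)) * t ^ (s + 1/2)) := by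
    rw [q0, q1]; field_simp
  rw [key, q2, q1]
  rw [abs_of_nonneg (by positivity)]
  nlinarith [mul_le_mul_of_nonneg_right hND hX.le]

lemma bound_gt1 {s t : ℝ} (hs0 : 0 < s) (hs2 : s ≤ 1) (ht : 1 < t) :
    |t * deriv (Fs s) t| ≤ 5 * Fs s t := by
  have ht0 : 0 < t := lt_trans one_pos ht
  have hev : Fs s =ᶠ[nhds t] fun u => u ^ s := by
    filter_upwards [Ioi_mem_nhds ht] with u hu
    exact Fs_eq_rpow hu.le
  rw [hev.deriv_eq, (Real.hasDerivAt_rpow_const (Or.inl ht0.ne')).deriv, Fs_eq_rpow ht.le]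
  have hts : t * (s * t ^ (s - 1)) = s * t ^ s := by
    rw [show s * t ^ s = s * (t ^ (s - 1) * t) by
      rw [← Real.rpow_add_one ht0.ne']; congr 2; ring]
    ring
  rw [hts, abs_of_nonneg (mul_nonneg hs0.le (Real.rpow_pos_of_pos ht0 _).le)]
  have := Real.rpow_pos_of_pos ht0 s
  nlinarith

lemma Fs_neg (s x : ℝ) : Fs s (-x) = Fs s x := by
  simp [Fs, theta, abs_neg, neg_sq]

theorem stmt_13 (s : ℝ) (hs : s ∈ Set.Ioc (1/2 : ℝ) 1) (t : ℝ) :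
    |t * deriv (Fs s) t| ≤ 5 * Fs s t := by
  obtain ⟨hs1, hs2⟩ := hs
  have hs0 : 0 < s := lt_trans (by norm_num) hs1
  have main : ∀ u : ℝ, 0 ≤ u → |u * deriv (Fs s) u| ≤ 5 * Fs s u := by
    intro u hu
    rcases eq_or_lt_of_le hu with rfl | hupos
    · simp [Fs, Real.zero_rpow hs0.ne']
    · rcases le_or_gt u 1 with h1 | h1
      · exact bound_pos hs1 hs2 hupos h1
      · exact bound_gt1 hs0 hs2 h1
  rcases le_or_gt 0 t with h | h
  · exact main t h
  · have hd : deriv (Fs s) t = -deriv (Fs s) (-t) := by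
      have hfe : Fs s = fun x => Fs s (-x) := by
        funext x; rw [Fs_neg]
      conv_lhs => rw [hfe]
      exact deriv_comp_neg (Fs s) t
    rw [hd, ← Fs_neg s t]
    calc |t * -deriv (Fs s) (-t)| = |(-t) * deriv (Fs s) (-t)| := by
          rw [show t * -deriv (Fs s) (-t) = (-t) * deriv (Fs s) (-t) by ring]
      _ ≤ 5 * Fs s (-t) := main (-t) (by linarith)
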